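/- Let T_l be any l×l matrix over GF(2), let T_L = T₂⊗T_l = [[T_l,0],[T_l,T_l]], let 0 ≤ i ≤ l−1, and let e = [e¹,e²] ∈ {0,1}^{2l} be an erasure pattern with halves e¹,e² ∈ {0,1}^l. Then e kills bit channel l+i of T_L if and only if the componentwise AND pattern e¹∧e² ∈ {0,1}^l (whose u-th coordinate is 1 exactly when e¹_u = 1 and e²_u = 1) kills bit channel i of T_l. -/

import Mathlib

open Matrix

/-- Kronecker product of square matrices over GF(2), with row/column index
pairs ordered lexicographically: `(a, b)` corresponds to index `a * n + b`. -/
noncomputable def kron {m n : ℕ} (A : Matrix (Fin m) (Fin m) (ZMod 2))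
    (B : Matrix (Fin n) (Fin n) (ZMod 2)) :
    Matrix (Fin (m * n)) (Fin (m * n)) (ZMod 2) :=
  Matrix.reindex finProdFinEquiv finProdFinEquiv (Matrix.kroneckerMap (· * ·) A B)

/-- The matrix `T₂ = [[1,0],[1,1]]` over GF(2). -/
def Ttwo : Matrix (Fin 2) (Fin 2) (ZMod 2) := !![1, 0; 1, 1]

/-- An erasure pattern `e : Fin l → Bool` (where `e j = true` means the `j`-th
copy of the channel is erased) kills bit channel `i` of the kernel `T` if the
vector `Y_{l-i} = (1,0,…,0)ᵀ` of length `l - i` (indexed by rows `r` with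
`i ≤ r`) is not in the `𝔽₂`-linear span of the columns of the submatrix
`T[i : l-1]` at the non-erased positions. -/
def Kills {l : ℕ} (T : Matrix (Fin l) (Fin l) (ZMod 2)) (i : Fin l)
    (e : Fin l → Bool) : Prop :=
  (fun r : {r : Fin l // i ≤ r} => if r.val = i then (1 : ZMod 2) else 0) ∉
    Submodule.span (ZMod 2)
      {w : {r : Fin l // i ≤ r} → ZMod 2 | ∃ j : Fin l, e j = false ∧ w = fun r => T r.val j}

/-!
In the rows `l + i, …, 2l - 1` of `T₂ ⊗ T_l`, both column `j` and column `l + j` agree with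
column `j` of `T_l` in the rows `i, …, l - 1`. So after shifting these rows up by `l`, the
vector `Y` is unchanged and the surviving columns of `T₂ ⊗ T_l` are exactly the columns `j`
of `T_l` for which `e¹ⱼ` or `e²ⱼ` is not erased, i.e. `(e¹ ∧ e²)ⱼ = 0`.
-/

lemma kron_apply {m n : ℕ} (A : Matrix (Fin m) (Fin m) (ZMod 2))
    (B : Matrix (Fin n) (Fin n) (ZMod 2)) (x y : Fin (m * n)) :
    kron A B x y = A x.divNat y.divNat * B x.modNat y.modNat :=
  rfl

theorem kills_congr {l l' : ℕ} {T : Matrix (Fin l) (Fin l) (ZMod 2)}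
    {T' : Matrix (Fin l') (Fin l') (ZMod 2)} {i : Fin l} {i' : Fin l'} {e : Fin l → Bool}
    {e' : Fin l' → Bool} (φ : {r : Fin l // i ≤ r} ≃ {r' : Fin l' // i' ≤ r'})
    (hφ : ∀ r, (φ r).val = i' ↔ r.val = i)
    (hcols : (fun j' r => T' (φ r).val j') '' {j' | e' j' = false} =
      (fun j r => T r.val j) '' {j | e j = false}) :
    Kills T' i' e' ↔ Kills T i e := by
  let E := LinearEquiv.funCongrLeft (ZMod 2) (ZMod 2) φ
  have hunit : E (fun r' => if r'.val = i' then 1 else 0) =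
      fun r => if r.val = i then 1 else 0 := by
    funext r
    simp [E, LinearEquiv.funCongrLeft_apply, hφ]
  have hlive : E '' {w | ∃ j', e' j' = false ∧ w = fun r' => T' r'.val j'} =
      {w | ∃ j, e j = false ∧ w = fun r => T r.val j} := by
    have hset : ∀ {n : ℕ} {ι : Type} (f : Fin n → ι → ZMod 2) (e : Fin n → Bool),
        {w | ∃ j, e j = false ∧ w = f j} = f '' {j | e j = false} := by
      intro n ι f e
      ext w
      exact exists_congr fun j => and_congr_right fun _ => eq_comm
    rw [hset, hset, ← hcols, Set.image_image]
    rfl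
  rw [Kills, Kills, ← hunit, ← hlive]
  exact not_congr (Submodule.apply_mem_span_image_iff_mem_span E.injective).symm

section LowerHalf

variable {l : ℕ}

lemma modNat_mk_val (u : Fin l) (h : (u : ℕ) < 2 * l) : Fin.modNat (⟨u, h⟩ : Fin (2 * l)) = u := by
  ext; simp [Fin.modNat, Nat.mod_eq_of_lt u.isLt]

lemma modNat_mk_add_val (u : Fin l) (h : l + (u : ℕ) < 2 * l) :
    Fin.modNat (⟨l + u, h⟩ : Fin (2 * l)) = u := by
  ext; simp [Fin.modNat, Nat.mod_eq_of_lt u.isLt]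

lemma divNat_mk_add_val (u : Fin l) (h : l + (u : ℕ) < 2 * l) :
    Fin.divNat (⟨l + u, h⟩ : Fin (2 * l)) = 1 := by
  ext; simp [Fin.divNat, Nat.add_div_left _ u.pos, Nat.div_eq_of_lt u.isLt]

lemma eq_mk_modNat_or_eq_mk_add_modNat (j : Fin (2 * l)) :
    j = ⟨j.modNat, by omega⟩ ∨ j = ⟨l + j.modNat, by omega⟩ := by
  rcases lt_or_ge (j : ℕ) l with h | h
  · left; ext; simp [Fin.modNat, Nat.mod_eq_of_lt h]
  · right; ext
    have hlt : (j : ℕ) - l < l := by omega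
    simp [Fin.modNat, Nat.mod_eq_sub_mod h, Nat.mod_eq_of_lt hlt]
    omega

lemma kron_Ttwo_apply_lower (T : Matrix (Fin l) (Fin l) (ZMod 2)) (r : Fin l)
    (hr : l + (r : ℕ) < 2 * l) (y : Fin (2 * l)) :
    kron Ttwo T ⟨l + r, hr⟩ y = T r y.modNat := by
  have hrow : ∀ c, Ttwo 1 c = 1 := by decide
  rw [kron_apply, divNat_mk_add_val, modNat_mk_add_val, hrow, one_mul]

lemma image_modNat_setOf_eq_false (e : Fin (2 * l) → Bool) :
    Fin.modNat '' {j | e j = false} =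
      {u : Fin l | (e ⟨u, by omega⟩ && e ⟨l + u, by omega⟩) = false} := by
  ext u
  constructor
  · rintro ⟨j, hj, rfl⟩
    rcases eq_mk_modNat_or_eq_mk_add_modNat j with h | h
    · exact Bool.and_eq_false_iff.mpr (.inl (by rwa [← h]))
    · exact Bool.and_eq_false_iff.mpr (.inr (by rwa [← h]))
  · intro hu
    rcases Bool.and_eq_false_iff.mp hu with h | h
    · exact ⟨_, h, modNat_mk_val u _⟩
    · exact ⟨_, h, modNat_mk_add_val u _⟩

def lowerRowsEquiv (i : Fin l) :
    {r : Fin l // i ≤ r} ≃ {r' : Fin (2 * l) // (⟨l + (i : ℕ), by omega⟩ : Fin (2 * l)) ≤ r'} where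
  toFun r := ⟨⟨l + (r.val : ℕ), by omega⟩, by have := Fin.le_def.mp r.2; simp [Fin.le_def, this]⟩
  invFun r' := ⟨⟨(r'.val : ℕ) - l, by omega⟩, by
    have := Fin.le_def.mp r'.2
    simp only [Fin.le_def] at this ⊢
    omega⟩
  left_inv r := by ext; simp
  right_inv r' := by
    have := Fin.le_def.mp r'.2
    simp only at this
    ext; simp; omega

end LowerHalf

theorem kills_kron_lowerHalf_iff {l : ℕ} (T : Matrix (Fin l) (Fin l) (ZMod 2)) (i : Fin l)
    (e : Fin (2 * l) → Bool) :
    Kills (kron Ttwo T) ⟨l + (i : ℕ), by have := i.isLt; omega⟩ e ↔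
      Kills T i (fun u =>
        e ⟨(u : ℕ), by have := u.isLt; omega⟩ && e ⟨l + (u : ℕ), by have := u.isLt; omega⟩) := by
  refine kills_congr (lowerRowsEquiv i) (fun r => by simp [lowerRowsEquiv, Fin.ext_iff]) ?_
  have hcol : (fun j' (r : {r : Fin l // i ≤ r}) => kron Ttwo T (lowerRowsEquiv i r).val j') =
      (fun j r => T r.val j) ∘ Fin.modNat := by
    funext j' r
    exact kron_Ttwo_apply_lower T r.val _ j'
  rw [hcol, Set.image_comp, image_modNat_setOf_eq_false]
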